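/- If the language L has at most countably many sentences and 𝒯 is a family of complete L-theories with |Cl_E(𝒯)| = 2^ℵ₀, then RS(𝒯) = ∞ (i.e., 𝒯 is not e-totally transcendental). -/

import Mathlib

open FirstOrder Language Cardinal Set

universe u v w

variable {L : FirstOrder.Language.{u, v}}

/-- A complete theory: a satisfiable set of sentences containing each sentence or its
negation (`Theory.IsMaximal` in Mathlib). -/
abbrev CTheory (L : FirstOrder.Language.{u, v}) : Type max u v :=
  {T : L.Theory // T.IsMaximal}

/-- The neighbourhood `𝒯_φ = {T ∈ 𝒯 | φ ∈ T}`. -/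
def nbhd (𝒯 : Set (CTheory L)) (φ : L.Sentence) : Set (CTheory L) :=
  {T | T ∈ 𝒯 ∧ φ ∈ T.1}

/-- `T` is an accumulation point of `𝒯` if for every sentence `φ ∈ T` the set `𝒯_φ` is
infinite. -/
def IsAccPoint (𝒯 : Set (CTheory L)) (T : CTheory L) : Prop :=
  ∀ φ : L.Sentence, φ ∈ T.1 → (nbhd 𝒯 φ).Infinite

/-- The `E`-closure of `𝒯`: `𝒯` together with all its accumulation points. -/
def ClE (𝒯 : Set (CTheory L)) : Set (CTheory L) :=
  𝒯 ∪ {T | IsAccPoint 𝒯 T}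

/-- The `e`-spectrum of `𝒯`: the cardinality of the set of accumulation points of `𝒯`. -/
noncomputable def eSp (𝒯 : Set (CTheory L)) : Cardinal :=
  Cardinal.mk {T : CTheory L // IsAccPoint 𝒯 T}

/-- Two sentences are inconsistent if `{φ, ψ}` is unsatisfiable. -/
def Inconsistent (φ ψ : L.Sentence) : Prop :=
  ¬ FirstOrder.Language.Theory.IsSatisfiable ({φ, ψ} : L.Theory)

open Classical in
/-- `RSge α 𝒯` says `RS(𝒯) ≥ α`: `RS(𝒯) ≥ 0` iff `𝒯 ≠ ∅`; `RS(𝒯) ≥ 1` iff `𝒯` is infinite;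
for `β ≥ 1`, `RS(𝒯) ≥ β + 1` iff there are pairwise inconsistent sentences `φ_n`, `n ∈ ℕ`,
with `RS(𝒯_{φ_n}) ≥ β` for all `n`; for limit `λ`, `RS(𝒯) ≥ λ` iff `RS(𝒯) ≥ β` for all
`β < λ`. -/
noncomputable def RSge (α : Ordinal.{w}) : Set (CTheory L) → Prop :=
  @Ordinal.limitRecOn (fun _ => Set (CTheory L) → Prop) α
    (fun 𝒯 => 𝒯.Nonempty)
    (fun β ih 𝒯 =>
      if β = 0 then 𝒯.Infinite
      else ∃ φ : ℕ → L.Sentence,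
        (∀ m n : ℕ, m ≠ n → Inconsistent (φ m) (φ n)) ∧ ∀ k : ℕ, ih (nbhd 𝒯 (φ k)))
    (fun β _ ih 𝒯 => ∀ γ : Ordinal, ∀ h : γ < β, ih γ h 𝒯)

/-- `RS(𝒯) = α` for an ordinal `α`: `RS(𝒯) ≥ α` but not `RS(𝒯) ≥ α + 1`. -/
def RSeq (𝒯 : Set (CTheory L)) (α : Ordinal.{w}) : Prop :=
  RSge α 𝒯 ∧ ¬ RSge (α + 1) 𝒯

/-- `RS(𝒯) = ∞`: `RS(𝒯) ≥ α` for every ordinal `α`. -/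
def RSinf (𝒯 : Set (CTheory L)) : Prop :=
  ∀ α : Ordinal.{w}, RSge α 𝒯

/-- `ds(𝒯) = n` (relative to `RS(𝒯) = α`): `n` is the largest natural number for which
there exist `n` pairwise inconsistent sentences `φ_1, …, φ_n` with `RS(𝒯_{φ_i}) = α`. -/
def dsEq (𝒯 : Set (CTheory L)) (α : Ordinal.{w}) (n : ℕ) : Prop :=
  IsGreatest {m : ℕ | ∃ φ : Fin m → L.Sentence,
    (∀ i j : Fin m, i ≠ j → Inconsistent (φ i) (φ j)) ∧
    ∀ i : Fin m, RSeq (nbhd 𝒯 (φ i)) α} n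

/-- `𝒯` is `e`-minimal: for every sentence `φ`, `𝒯_φ` is finite or `𝒯_{¬φ}` is finite. -/
def EMinimal (𝒯 : Set (CTheory L)) : Prop :=
  ∀ φ : L.Sentence, (nbhd 𝒯 φ).Finite ∨ (nbhd 𝒯 φ.not).Finite

/-- `𝒯` is `a`-minimal: `𝒯` has infinitely many accumulation points and for every sentence
`φ`, `𝒯_φ` or `𝒯_{¬φ}` has only finitely many accumulation points. -/
def AMinimal (𝒯 : Set (CTheory L)) : Prop :=
  {T : CTheory L | IsAccPoint 𝒯 T}.Infinite ∧
  ∀ φ : L.Sentence,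
    {T : CTheory L | IsAccPoint (nbhd 𝒯 φ) T}.Finite ∨
    {T : CTheory L | IsAccPoint (nbhd 𝒯 φ.not) T}.Finite

/-- `𝒯` is `α`-minimal: `RS(𝒯) = α` and for every sentence `φ`, `RS(𝒯_φ) < α` or
`RS(𝒯_{¬φ}) < α`. -/
def AlphaMinimal (𝒯 : Set (CTheory L)) (α : Ordinal.{w}) : Prop :=
  RSeq 𝒯 α ∧
  ∀ φ : L.Sentence, ¬ RSge α (nbhd 𝒯 φ) ∨ ¬ RSge α (nbhd 𝒯 φ.not)

/-!
If `Cl_E(𝒯)` is uncountable, some sentence `φ` splits it into two pieces `𝒯_φ`, `𝒯_¬φ` whose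
closures are both uncountable: otherwise `Cl_E(𝒯)` is covered by the countably many countable
sets `Cl_E(𝒯_φ)` and the at most one complete theory avoiding all such `φ`. Splitting again and
again on the `¬φ` side produces pairwise inconsistent sentences `χ_n` with every `Cl_E(𝒯_{χ_n})`
uncountable, so by induction on `α` every family with uncountable closure has `RS ≥ α`.
-/

namespace CTheory

variable (T : CTheory L)

theorem mem_iff_realize (M : T.1.ModelType) (φ : L.Sentence) : φ ∈ T.1 ↔ M ⊨ φ :=
  (T.2.mem_iff_models φ).trans (T.2.isComplete.realize_sentence_iff φ M).symm

theorem inf_mem_iff (φ ψ : L.Sentence) : φ ⊓ ψ ∈ T.1 ↔ φ ∈ T.1 ∧ ψ ∈ T.1 := by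
  obtain ⟨M⟩ := T.2.1
  rw [mem_iff_realize T M, mem_iff_realize T M, mem_iff_realize T M, Sentence.realize_inf]

theorem top_mem : (⊤ : L.Sentence) ∈ T.1 := by
  obtain ⟨M⟩ := T.2.1
  exact (mem_iff_realize T M ⊤).2 (Sentence.realize_top _)

theorem subsingleton_setOf_disjoint {S : Set L.Sentence} (hS : ∀ φ, φ ∈ S ∨ φ.not ∈ S) :
    {T : CTheory L | Disjoint T.1 S}.Subsingleton := by
  have hsub : ∀ T T' : CTheory L, Disjoint T.1 S → Disjoint T'.1 S → T.1 ⊆ T'.1 :=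
    fun T T' hT hT' φ hφ => (T'.2.mem_or_not_mem φ).resolve_right fun hφ' =>
      disjoint_left.1 hT' hφ' ((hS φ).resolve_left (disjoint_left.1 hT hφ))
  exact fun T hT T' hT' =>
    Subtype.ext (subset_antisymm (hsub T T' hT hT') (hsub T' T hT' hT))

end CTheory

variable {𝒯 : Set (CTheory L)}

theorem nbhd_top : nbhd 𝒯 ⊤ = 𝒯 :=
  ext fun T => and_iff_left (CTheory.top_mem T)

theorem nbhd_inf (φ ψ : L.Sentence) : nbhd 𝒯 (φ ⊓ ψ) = nbhd (nbhd 𝒯 φ) ψ :=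
  ext fun T => (and_congr_right' (CTheory.inf_mem_iff T φ ψ)).trans and_assoc.symm

theorem IsAccPoint.infinite {T : CTheory L} (hT : IsAccPoint 𝒯 T) : 𝒯.Infinite := by
  simpa only [nbhd_top] using hT ⊤ (CTheory.top_mem T)

theorem clE_eq_self_of_finite (h𝒯 : 𝒯.Finite) : ClE 𝒯 = 𝒯 :=
  union_eq_left.2 fun _ hT => (IsAccPoint.infinite hT h𝒯).elim

theorem infinite_of_not_countable_clE (h : ¬ (ClE 𝒯).Countable) : 𝒯.Infinite :=
  fun h𝒯 => h (by rw [clE_eq_self_of_finite h𝒯]; exact h𝒯.countable)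

theorem mem_clE_nbhd {T : CTheory L} {φ : L.Sentence} (hT : T ∈ ClE 𝒯) (hφ : φ ∈ T.1) :
    T ∈ ClE (nbhd 𝒯 φ) := by
  rcases hT with hT | hT
  · exact Or.inl ⟨hT, hφ⟩
  · refine Or.inr fun ψ hψ => ?_
    rw [← nbhd_inf]
    exact hT _ ((CTheory.inf_mem_iff T φ ψ).2 ⟨hφ, hψ⟩)

theorem exists_split_of_not_countable_clE [Countable L.Sentence] (h : ¬ (ClE 𝒯).Countable) :
    ∃ φ : L.Sentence, ¬ (ClE (nbhd 𝒯 φ)).Countable ∧ ¬ (ClE (nbhd 𝒯 φ.not)).Countable := by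
  by_contra! hsplit
  set S := {φ : L.Sentence | (ClE (nbhd 𝒯 φ)).Countable}
  have hS : ∀ φ, φ ∈ S ∨ φ.not ∈ S := fun φ => or_iff_not_imp_left.2 (hsplit φ)
  have hcover : ClE 𝒯 ⊆ (⋃ φ ∈ S, ClE (nbhd 𝒯 φ)) ∪ {T | Disjoint T.1 S} := by
    intro T hT
    by_cases hmeet : Disjoint T.1 S
    · exact Or.inr hmeet
    · obtain ⟨φ, hφT, hφS⟩ := not_disjoint_iff.1 hmeet
      exact Or.inl (mem_biUnion hφS (mem_clE_nbhd hT hφT))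
  exact h ((((to_countable S).biUnion fun _ hφ => hφ).union
    (CTheory.subsingleton_setOf_disjoint hS).countable).mono hcover)

instance : Std.Symm (Inconsistent (L := L)) where
  symm φ ψ h := by rwa [Inconsistent, pair_comm]

theorem inconsistent_inf_of_lt {θ φ : ℕ → L.Sentence} (hθ : ∀ n, θ (n + 1) = θ n ⊓ (φ n).not)
    {m n : ℕ} (hmn : m < n) : Inconsistent (θ m ⊓ φ m) (θ n ⊓ φ n) := by
  rintro ⟨M⟩
  have hm : M ⊨ θ m ⊓ φ m :=
    Theory.realize_sentence_of_mem {θ m ⊓ φ m, θ n ⊓ φ n} (mem_insert _ _)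
  have hn : M ⊨ θ n ⊓ φ n :=
    Theory.realize_sentence_of_mem {θ m ⊓ φ m, θ n ⊓ φ n} (mem_insert_of_mem _ rfl)
  have hdesc : ∀ k, m + 1 ≤ k → M ⊨ θ k → M ⊨ θ (m + 1) := by
    refine Nat.le_induction (fun h => h) fun k _ ih hk => ih ?_
    rw [hθ, Sentence.realize_inf] at hk
    exact hk.1
  have hm' := hdesc n hmn ((Sentence.realize_inf M).1 hn).1
  rw [hθ, Sentence.realize_inf, Sentence.realize_not] at hm'
  exact hm'.2 ((Sentence.realize_inf M).1 hm).2

theorem exists_pairwise_inconsistent_of_not_countable_clE [Countable L.Sentence]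
    (h : ¬ (ClE 𝒯).Countable) :
    ∃ χ : ℕ → L.Sentence, Pairwise (fun m n => Inconsistent (χ m) (χ n)) ∧
      ∀ n, ¬ (ClE (nbhd 𝒯 (χ n))).Countable := by
  choose split hsplit using fun θ : {θ : L.Sentence // ¬ (ClE (nbhd 𝒯 θ)).Countable} =>
    exists_split_of_not_countable_clE θ.2
  let θ : ℕ → {θ : L.Sentence // ¬ (ClE (nbhd 𝒯 θ)).Countable} := fun n =>
    n.rec ⟨⊤, by rwa [nbhd_top]⟩ fun _ t =>
      ⟨t.1 ⊓ (split t).not, by rw [nbhd_inf]; exact (hsplit t).2⟩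
  refine ⟨fun n => (θ n).1 ⊓ split (θ n), (Std.Symm.pairwise_on _).2 fun m n hmn => ?_,
    fun n => by rw [nbhd_inf]; exact (hsplit _).1⟩
  exact inconsistent_inf_of_lt (θ := fun n => (θ n).1) (φ := fun n => split (θ n))
    (fun _ => rfl) hmn

theorem rsge_zero_iff : RSge (0 : Ordinal.{w}) 𝒯 ↔ 𝒯.Nonempty := by
  rw [RSge, Ordinal.limitRecOn_zero]

open Classical in
theorem rsge_add_one_iff (β : Ordinal.{w}) :
    RSge (β + 1) 𝒯 ↔
      if β = 0 then 𝒯.Infinite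
      else ∃ φ : ℕ → L.Sentence, (∀ m n : ℕ, m ≠ n → Inconsistent (φ m) (φ n)) ∧
        ∀ k : ℕ, RSge β (nbhd 𝒯 (φ k)) := by
  rw [RSge, Ordinal.limitRecOn_add_one]
  rfl

theorem rsge_iff_of_isSuccLimit {β : Ordinal.{w}} (hβ : Order.IsSuccLimit β) :
    RSge β 𝒯 ↔ ∀ γ < β, RSge γ 𝒯 := by
  rw [RSge, Ordinal.limitRecOn_limit _ _ _ _ hβ]
  rfl

theorem rsge_of_not_countable_clE [Countable L.Sentence] (α : Ordinal.{w}) :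
    ∀ {𝒯 : Set (CTheory L)}, ¬ (ClE 𝒯).Countable → RSge α 𝒯 := by
  induction α using Ordinal.limitRecOn with
  | zero => exact fun h => rsge_zero_iff.2 (infinite_of_not_countable_clE h).nonempty
  | add_one β ih =>
    intro 𝒯 h
    rw [rsge_add_one_iff]
    split_ifs
    · exact infinite_of_not_countable_clE h
    · obtain ⟨χ, hχ, hχ_clE⟩ := exists_pairwise_inconsistent_of_not_countable_clE h
      exact ⟨χ, fun _ _ hmn => hχ hmn, fun n => ih (hχ_clE n)⟩
  | limit β hβ ih => exact fun h => (rsge_iff_of_isSuccLimit hβ).2 fun γ hγ => ih γ hγ h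

/-- Proposition 4.4: if the language has at most countably many sentences
and `|Cl_E(𝒯)| = 2^ℵ₀`, then `RS(𝒯) = ∞`. -/
theorem rank_infty_of_continuum_clE (𝒯 : Set (CTheory L))
    (hL : Cardinal.mk L.Sentence ≤ Cardinal.aleph0)
    (h : Cardinal.mk ↥(ClE 𝒯) = (2 : Cardinal) ^ Cardinal.aleph0) :
    (∀ α : Ordinal.{w}, RSge α 𝒯) := by
  have : Countable L.Sentence := Cardinal.mk_le_aleph0_iff.1 hL
  have h_unc : ¬ (ClE 𝒯).Countable := fun hc =>
    (Cardinal.cantor ℵ₀).not_ge (h ▸ hc.le_aleph0)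
  exact fun α => rsge_of_not_countable_clE α h_unc
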